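/- Let q0, q1 : ℝ → ℂ be infinitely differentiable and define the fourth-order differential expression P4 acting on infinitely differentiable ψ : ℝ → ℂ by (P4ψ)(x) = (L3ψ)′(x) + (1/3) q1(x) ψ″(x) + ( (1/3) q0(x) − (1/6) q1′(x) ) ψ′(x) + ( (1/18) q1″(x) + (2/9) q1(x)² − (1/3) q0′(x) ) ψ(x). Set F(x) = (2/3) q0″(x) + (4/3) q0(x) q1(x) and G(x) = −(1/18) q1⁗(x) − (1/6) q1′(x)² − (4/27) q1(x)³ − (1/3) q1(x) q1″(x) + (2/3) q0(x)². Then for every infinitely differentiable ψ : ℝ → ℂ and every x ∈ ℝ: P4(L3ψ)(x) − L3(P4ψ)(x) = F′(x) ψ′(x) + ( (1/2) F″(x) + G′(x) ) ψ(x). In particular, the commutator [P4, L3] is a differential expression of order one. -/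

import Mathlib

/-- The third-order Boussinesq Lax differential expression
`L₃ψ = ψ''' + q₁ ψ' + ((1/2) q₁' + q₀) ψ`. -/
noncomputable def L3 (q0 q1 ψ : ℝ → ℂ) : ℝ → ℂ :=
  fun x => iteratedDeriv 3 ψ x + q1 x * deriv ψ x
    + ((1 / 2 : ℂ) * deriv q1 x + q0 x) * ψ x

/-- The fourth-order differential expression `P₄` of the Boussinesq hierarchy. -/
noncomputable def P4 (q0 q1 ψ : ℝ → ℂ) : ℝ → ℂ :=
  fun x => deriv (L3 q0 q1 ψ) x
    + (1 / 3 : ℂ) * q1 x * iteratedDeriv 2 ψ x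
    + ((1 / 3 : ℂ) * q0 x - (1 / 6 : ℂ) * deriv q1 x) * deriv ψ x
    + ((1 / 18 : ℂ) * iteratedDeriv 2 q1 x + (2 / 9 : ℂ) * (q1 x) ^ 2
        - (1 / 3 : ℂ) * deriv q0 x) * ψ x

namespace CommTest
open scoped ContDiff

/-- Formal expressions built from iterated derivatives of three function symbols. -/
inductive E : Type
  | A : ℕ → E   -- iteratedDeriv n q0
  | B : ℕ → E   -- iteratedDeriv n q1
  | P : ℕ → E   -- iteratedDeriv n ψ
  | const : ℂ → E
  | add : E → E → E
  | mul : E → E → E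

namespace E

noncomputable def eval (q0 q1 ψ : ℝ → ℂ) : E → ℝ → ℂ
  | A n => iteratedDeriv n q0
  | B n => iteratedDeriv n q1
  | P n => iteratedDeriv n ψ
  | const c => fun _ => c
  | add a b => fun x => eval q0 q1 ψ a x + eval q0 q1 ψ b x
  | mul a b => fun x => eval q0 q1 ψ a x * eval q0 q1 ψ b x

/-- Formal derivative. -/
def D : E → E
  | A n => A (n+1)
  | B n => B (n+1)
  | P n => P (n+1)
  | const _ => const 0
  | add a b => add (D a) (D b)
  | mul a b => add (mul (D a) b) (mul a (D b))

variable {q0 q1 ψ : ℝ → ℂ}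
variable (hq0 : ContDiff ℝ ∞ q0) (hq1 : ContDiff ℝ ∞ q1) (hψ : ContDiff ℝ ∞ ψ)

lemma smooth_iD {f : ℝ → ℂ} (hf : ContDiff ℝ ∞ f) (n : ℕ) :
    ContDiff ℝ ∞ (iteratedDeriv n f) := by
  rw [iteratedDeriv_eq_iterate]
  exact ContDiff.iterate_deriv n hf

include hq0 hq1 hψ in
lemma eval_contDiff (e : E) : ContDiff ℝ ∞ (eval q0 q1 ψ e) := by
  induction e with
  | A n => exact smooth_iD hq0 n
  | B n => exact smooth_iD hq1 n
  | P n => exact smooth_iD hψ n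
  | const c => exact contDiff_const
  | add a b ha hb => exact ha.add hb
  | mul a b ha hb => exact ha.mul hb

lemma hasDerivAt_iD {f : ℝ → ℂ} (hf : ContDiff ℝ ∞ f) (n : ℕ) (x : ℝ) :
    HasDerivAt (iteratedDeriv n f) (iteratedDeriv (n+1) f x) x := by
  rw [iteratedDeriv_succ]
  exact (((smooth_iD hf n).differentiable (by simp)) x).hasDerivAt

include hq0 hq1 hψ in
lemma hasDerivAt_eval (e : E) (x : ℝ) :
    HasDerivAt (eval q0 q1 ψ e) (eval q0 q1 ψ (D e) x) x := by
  induction e with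
  | A n => exact hasDerivAt_iD hq0 n x
  | B n => exact hasDerivAt_iD hq1 n x
  | P n => exact hasDerivAt_iD hψ n x
  | const c => exact hasDerivAt_const x c
  | add a b ha hb => exact ha.add hb
  | mul a b ha hb => exact ha.mul hb

include hq0 hq1 hψ in
lemma deriv_eval (e : E) : deriv (eval q0 q1 ψ e) = eval q0 q1 ψ (D e) :=
  funext fun x => (hasDerivAt_eval hq0 hq1 hψ e x).deriv

include hq0 hq1 hψ in
lemma iteratedDeriv_eval (n : ℕ) (e : E) :
    iteratedDeriv n (eval q0 q1 ψ e) = eval q0 q1 ψ (D^[n] e) := by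
  induction n generalizing e with
  | zero => simp [iteratedDeriv_zero]
  | succ n ih =>
      rw [iteratedDeriv_succ', deriv_eval hq0 hq1 hψ, ih, ← Function.iterate_succ_apply]

end E

end CommTest

namespace CommTest
open E
open scoped ContDiff

/-- Formal version of `L3`. -/
noncomputable def l3E (e : E) : E :=
  .add (.add (D (D (D e))) (.mul (B 0) (D e)))
       (.mul (.add (.mul (.const (1/2)) (B 1)) (A 0)) e)

/-- Formal version of `P4`. -/
noncomputable def p4E (e : E) : E :=
  .add (.add (.add (D (l3E e)) (.mul (.mul (.const (1/3)) (B 0)) (D (D e))))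
      (.mul (.add (.mul (.const (1/3)) (A 0)) (.mul (.const (-(1/6))) (B 1))) (D e)))
    (.mul (.add (.add (.mul (.const (1/18)) (B 2)) (.mul (.const (2/9)) (.mul (B 0) (B 0))))
        (.mul (.const (-(1/3))) (A 1))) e)

variable {q0 q1 ψ : ℝ → ℂ}
variable (hq0 : ContDiff ℝ ∞ q0) (hq1 : ContDiff ℝ ∞ q1) (hψ : ContDiff ℝ ∞ ψ)

include hq0 hq1 hψ in
lemma L3_eval (e : E) : L3 q0 q1 (eval q0 q1 ψ e) = eval q0 q1 ψ (l3E e) := by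
  funext x
  have h3 : iteratedDeriv 3 (eval q0 q1 ψ e) = eval q0 q1 ψ (D^[3] e) :=
    iteratedDeriv_eval hq0 hq1 hψ 3 e
  simp only [L3, h3, deriv_eval hq0 hq1 hψ]
  simp only [l3E, eval, Function.iterate_succ_apply, Function.iterate_zero_apply,
    iteratedDeriv_zero, iteratedDeriv_one]

include hq0 hq1 hψ in
lemma P4_eval (e : E) : P4 q0 q1 (eval q0 q1 ψ e) = eval q0 q1 ψ (p4E e) := by
  funext x
  have h2 : iteratedDeriv 2 (eval q0 q1 ψ e) = eval q0 q1 ψ (D^[2] e) :=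
    iteratedDeriv_eval hq0 hq1 hψ 2 e
  simp only [P4, L3_eval hq0 hq1 hψ, h2, deriv_eval hq0 hq1 hψ]
  simp only [p4E, l3E, eval, Function.iterate_succ_apply, Function.iterate_zero_apply,
    iteratedDeriv_zero, iteratedDeriv_one, Nat.reduceAdd]
  ring

end CommTest

namespace CommTest
open E
open scoped ContDiff

/-- Formal version of `F`. -/
noncomputable def eF : E :=
  .add (.mul (.const (2/3)) (A 2)) (.mul (.mul (.const (4/3)) (A 0)) (B 0))

/-- Formal version of `G`. -/
noncomputable def eG : E :=
  .add (.add (.add (.add (.mul (.const (-(1/18))) (B 4))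
      (.mul (.const (-(1/6))) (.mul (B 1) (B 1))))
      (.mul (.const (-(4/27))) (.mul (B 0) (.mul (B 0) (B 0)))))
      (.mul (.const (-(1/3))) (.mul (B 0) (B 2))))
    (.mul (.const (2/3)) (.mul (A 0) (A 0)))

end CommTest

open CommTest CommTest.E

/-- The commutator `[P₄, L₃]` is the first-order differential expression
`F' (d/dx) + ((1/2) F'' + G')`. -/
theorem commutator_P4_L3_order_one
    (q0 q1 : ℝ → ℂ) (hq0 : ContDiff ℝ (⊤ : ℕ∞) q0) (hq1 : ContDiff ℝ (⊤ : ℕ∞) q1)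
    (F G : ℝ → ℂ)
    (hF : ∀ x : ℝ, F x = (2 / 3) * iteratedDeriv 2 q0 x + (4 / 3) * q0 x * q1 x)
    (hG : ∀ x : ℝ, G x = -(1 / 18) * iteratedDeriv 4 q1 x
        - (1 / 6) * (deriv q1 x) ^ 2 - (4 / 27) * (q1 x) ^ 3
        - (1 / 3) * q1 x * iteratedDeriv 2 q1 x + (2 / 3) * (q0 x) ^ 2) :
    ∀ ψ : ℝ → ℂ, ContDiff ℝ (⊤ : ℕ∞) ψ → ∀ x : ℝ,
      P4 q0 q1 (L3 q0 q1 ψ) x - L3 q0 q1 (P4 q0 q1 ψ) x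
        = deriv F x * deriv ψ x
          + ((1 / 2) * iteratedDeriv 2 F x + deriv G x) * ψ x := by
  intro ψ hψt x
  have hq0' : ContDiff ℝ (⊤ : ℕ∞) q0 := hq0.of_le (by simp)
  have hq1' : ContDiff ℝ (⊤ : ℕ∞) q1 := hq1.of_le (by simp)
  have hψ' : ContDiff ℝ (⊤ : ℕ∞) ψ := hψt.of_le (by simp)
  have hψ0 : ψ = eval q0 q1 ψ (P 0) := by simp [eval]
  have e1 : L3 q0 q1 ψ = eval q0 q1 ψ (l3E (.P 0)) := by
    conv_lhs => rw [hψ0]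
    exact L3_eval hq0' hq1' hψ' (.P 0)
  have e2 : P4 q0 q1 ψ = eval q0 q1 ψ (p4E (.P 0)) := by
    conv_lhs => rw [hψ0]
    exact P4_eval hq0' hq1' hψ' (.P 0)
  have E1 : P4 q0 q1 (L3 q0 q1 ψ) = eval q0 q1 ψ (p4E (l3E (.P 0))) := by
    rw [e1, P4_eval hq0' hq1' hψ']
  have E2 : L3 q0 q1 (P4 q0 q1 ψ) = eval q0 q1 ψ (l3E (p4E (.P 0))) := by
    rw [e2, L3_eval hq0' hq1' hψ']
  have hFe : F = eval q0 q1 ψ eF := by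
    funext y
    rw [hF y]
    simp only [eF, eval, iteratedDeriv_zero]
    try ring
  have hGe : G = eval q0 q1 ψ eG := by
    funext y
    rw [hG y]
    simp only [eG, eval, iteratedDeriv_zero, iteratedDeriv_one]
    ring
  have hdF : deriv F = eval q0 q1 ψ (D eF) := by
    rw [hFe, deriv_eval hq0' hq1' hψ']
  have hd2F : iteratedDeriv 2 F = eval q0 q1 ψ (D^[2] eF) := by
    rw [hFe, iteratedDeriv_eval hq0' hq1' hψ']
  have hdG : deriv G = eval q0 q1 ψ (D eG) := by
    rw [hGe, deriv_eval hq0' hq1' hψ']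
  have hdψ : deriv ψ = eval q0 q1 ψ (P 1) := by
    simp [eval, iteratedDeriv_one]
  rw [E1, E2, hdF, hd2F, hdG, hdψ]
  simp only [p4E, l3E, eF, eG, E.D, eval,
    Function.iterate_succ_apply, Function.iterate_zero_apply,
    iteratedDeriv_zero, iteratedDeriv_one, Nat.reduceAdd]
  ring
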